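/- arXiv:1708.09211 — 2 statements merged into one kernel-verified Lean document; each statement's English description precedes it below -/
import Mathlib

section
/- Let X_1, X_2, ... be i.i.d. random vectors taking values in K having a Lebesgue density f. Suppose there exist ε > 0 and a ball S ⊆ K such that f(x) ≤ 1 − ε for every x ∈ S. Then for every real constant c, lim_{n→∞} P( n V_n − log n − (d−1) log log n > c ) = 1; in particular, for the critical values c_{n,α} = (g_{1−α} + log n + (d−1) log log n + β)/n with arbitrary fixed real constants g_{1−α} and β, one has lim_{n→∞} P( V_n > c_{n,α} ) = 1, i.e., the maximum spacings test for uniformity is consistent against every such alternative. -/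
/-!
Under the alternative the sample is too sparse on the ball `S`. Fix `γ` with `1 < γ` and
`γ (1 - ε) < 1`, put `r ^ d = γ log n / n`, and place a grid of `m ^ d ≍ n / log n` disjoint
translates of `r • closure A` inside `S`. Each cell has probability mass at most
`q = (1 - ε) r ^ d`, so it receives no sample point with probability at least
`(1 - q) ^ n ≥ n ^ (-θ)` for some `θ < 1`, and the emptiness events of disjoint cells are
negatively correlated. The second-moment method then shows that with probability tending to one
some cell is empty. An empty cell gives `Δₙ ≥ r`, i.e. `n Vₙ ≥ γ log n`, and `γ log n`
eventually exceeds `log n + (d - 1) log log n + c`.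
-/

open MeasureTheory Filter

/-- The maximum spacing generated by the point set `Q` within `K`, with respect to the
reference set `A`: the supremum of all `r ≥ 0` such that some translate of `r • A`
is contained in `K` and avoids every point of `Q`. -/
noncomputable def maxSpacing (d : ℕ) (K A Q : Set (Fin d → ℝ)) : ℝ :=
  sSup {r : ℝ | 0 ≤ r ∧ ∃ x : Fin d → ℝ, (fun y => x + r • y) '' A ⊆ K \ Q}

open Metric Topology

section AddHaar

variable {E : Type*} [NormedAddCommGroup E] [NormedSpace ℝ E] [MeasurableSpace E] [BorelSpace E]
  [FiniteDimensional ℝ E] (μ : Measure E) [μ.IsAddHaarMeasure]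

lemma MeasureTheory.Measure.addHaar_image_add_smul (x : E) {r : ℝ} (hr : 0 ≤ r) (B : Set E) :
    μ ((fun y => x + r • y) '' B) = ENNReal.ofReal (r ^ Module.finrank ℝ E) * μ B := by
  rw [← Set.image_image (fun y => x + y) (fun y => r • y), Set.image_add_left,
    measure_preimage_add, Set.image_smul, Measure.addHaar_smul_of_nonneg μ hr]

lemma Convex.addHaar_closure {A : Set E} (hA : Convex ℝ A) : μ (closure A) = μ A := by
  refine le_antisymm ?_ (measure_mono subset_closure)
  calc μ (closure A) ≤ μ A + μ (frontier A) := by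
        rw [closure_eq_self_union_frontier]; exact measure_union_le _ _
    _ = μ A := by rw [hA.addHaar_frontier μ, add_zero]

end AddHaar

lemma le_maxSpacing {d : ℕ} (hd : d ≠ 0) {K A Q : Set (Fin d → ℝ)} (hK : volume K ≠ ⊤)
    (hA : volume A ≠ 0) {r : ℝ} (hr : 0 ≤ r) {x : Fin d → ℝ}
    (hx : (fun y => x + r • y) '' A ⊆ K \ Q) : r ≤ maxSpacing d K A Q := by
  -- A translate of `s • A` inside `K` forces `s ^ d * |A| ≤ |K|`; without this bound `sSup` would
  -- be the junk value `0`.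
  refine le_csSup ⟨max 1 (volume K / volume A).toReal, ?_⟩ ⟨hr, x, hx⟩
  rintro s ⟨hs, y, hy⟩
  have hvol : ENNReal.ofReal (s ^ d) * volume A ≤ volume K := by
    calc ENNReal.ofReal (s ^ d) * volume A = volume ((fun v => y + s • v) '' A) := by
          rw [Measure.addHaar_image_add_smul volume y hs, Module.finrank_fin_fun]
      _ ≤ volume K := measure_mono (hy.trans Set.sdiff_subset)
  have hsd : s ^ d ≤ (volume K / volume A).toReal := by
    rw [← ENNReal.ofReal_le_iff_le_toReal (ENNReal.div_ne_top hK hA)]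
    exact (ENNReal.le_div_iff_mul_le (Or.inl hA) (Or.inr hK)).mpr hvol
  rcases le_or_gt s 1 with hs1 | hs1
  · exact le_max_of_le_left hs1
  · exact le_max_of_le_right ((le_self_pow₀ hs1.le hd).trans hsd)

lemma exists_pairwise_disjoint_closedBall_grid {d m : ℕ} (hm : 1 ≤ m) (z : Fin d → ℝ)
    {ρ s : ℝ} (hs : 0 < s) (hsm : 3 * s * m ≤ 2 * ρ) :
    ∃ w : (Fin d → Fin m) → Fin d → ℝ, (∀ k, closedBall (w k) s ⊆ closedBall z ρ) ∧
      Pairwise fun k k' => Disjoint (closedBall (w k) s) (closedBall (w k') s) := by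
  have hm' : (1 : ℝ) ≤ m := by exact_mod_cast hm
  refine ⟨fun k i => z i - ρ + s + 3 * s * (k i : ℕ), fun k => ?_, fun k k' hkk' => ?_⟩
  · refine closedBall_subset_closedBall' ?_
    suffices dist _ z ≤ ρ - s by linarith
    refine (dist_pi_le_iff (by nlinarith)).mpr fun i => ?_
    have hki : ((k i : ℕ) : ℝ) + 1 ≤ m := by exact_mod_cast (k i).isLt
    rw [Real.dist_eq, abs_le]
    constructor <;> nlinarith [(k i : ℕ).cast_nonneg (α := ℝ)]
  · obtain ⟨i, hi⟩ := Function.ne_iff.mp hkk'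
    have hne : (1 : ℝ) ≤ |((k i : ℕ) : ℝ) - (k' i : ℕ)| := by
      have := Int.one_le_abs (sub_ne_zero.mpr (Int.natCast_inj.not.mpr (Fin.val_ne_of_ne hi)))
      exact_mod_cast this
    refine closedBall_disjoint_closedBall ?_
    calc s + s < 3 * s * |((k i : ℕ) : ℝ) - (k' i : ℕ)| := by nlinarith
      _ = dist (z i - ρ + s + 3 * s * (k i : ℕ)) (z i - ρ + s + 3 * s * (k' i : ℕ)) := by
        rw [Real.dist_eq, ← abs_of_pos (by positivity : 0 < 3 * s), ← abs_mul,
          abs_of_pos (by positivity : 0 < 3 * s)]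
        ring_nf
      _ ≤ _ := dist_le_pi_dist (fun i => z i - ρ + s + 3 * s * (k i : ℕ))
          (fun i => z i - ρ + s + 3 * s * (k' i : ℕ)) i

section SecondMoment

variable {Ω ι : Type*} (s : Finset ι) {E : ι → Set Ω}

lemma sq_sum_indicator_one (ω : Ω) :
    (∑ j ∈ s, (E j).indicator (1 : Ω → ℝ) ω) ^ 2 =
      ∑ j ∈ s, ∑ k ∈ s, (E j ∩ E k).indicator 1 ω := by
  simp only [sq, Finset.sum_mul_sum, Set.inter_indicator_one, Pi.mul_apply]

variable [MeasurableSpace Ω] {P : Measure Ω}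

lemma sum_sum_measureReal_inter_le
    (hpair : ∀ j ∈ s, ∀ k ∈ s, j ≠ k → P.real (E j ∩ E k) ≤ P.real (E j) * P.real (E k)) :
    ∑ j ∈ s, ∑ k ∈ s, P.real (E j ∩ E k) ≤
      ∑ j ∈ s, P.real (E j) + (∑ j ∈ s, P.real (E j)) ^ 2 := by
  classical
  have hdiag : ∀ j ∈ s, ∀ k ∈ s, P.real (E j ∩ E k) ≤
      (if j = k then P.real (E j) else 0) + P.real (E j) * P.real (E k) := by
    intro j hj k hk
    by_cases hjk : j = k
    · subst hjk
      simp only [Set.inter_self, if_true, le_add_iff_nonneg_right]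
      exact mul_nonneg measureReal_nonneg measureReal_nonneg
    · simpa [hjk] using hpair j hj k hk hjk
  calc ∑ j ∈ s, ∑ k ∈ s, P.real (E j ∩ E k)
      ≤ ∑ j ∈ s, ∑ k ∈ s, ((if j = k then P.real (E j) else 0) + P.real (E j) * P.real (E k)) :=
        Finset.sum_le_sum fun j hj => Finset.sum_le_sum fun k hk => hdiag j hj k hk
    _ = _ := by
        simp only [Finset.sum_add_distrib, Finset.sum_ite_eq, ← Finset.sum_mul_sum, sq]
        congr 1
        exact Finset.sum_congr rfl fun j hj => if_pos hj

lemma measureReal_biInter_compl_mul_sq_le [IsProbabilityMeasure P]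
    (hE : ∀ j, MeasurableSet (E j))
    (hpair : ∀ j ∈ s, ∀ k ∈ s, j ≠ k → P.real (E j ∩ E k) ≤ P.real (E j) * P.real (E k)) :
    P.real (⋂ j ∈ s, (E j)ᶜ) * (∑ j ∈ s, P.real (E j)) ^ 2 ≤ ∑ j ∈ s, P.real (E j) := by
  -- `Z = ∑ j, 1_{E j}` vanishes on the event, where `(S - Z) ^ 2 = S ^ 2`; Markov's inequality for
  -- `(S - Z) ^ 2` and `E[Z ^ 2] ≤ S + S ^ 2` give the bound.
  set S := ∑ j ∈ s, P.real (E j)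
  set Z : Ω → ℝ := fun ω => ∑ j ∈ s, (E j).indicator 1 ω
  have hint : ∀ j k, Integrable ((E j ∩ E k).indicator (1 : Ω → ℝ)) P := fun j k =>
    (integrable_const 1).indicator ((hE j).inter (hE k))
  have hZ_int : Integrable Z P := integrable_finsetSum s fun j _ => by simpa using hint j j
  have hZ_sq_int : Integrable (fun ω => Z ω ^ 2) P := by
    simp_rw [Z, sq_sum_indicator_one]
    exact integrable_finsetSum s fun j _ => integrable_finsetSum s fun k _ => hint j k
  have hmean : ∫ ω, Z ω ∂P = S := by
    rw [integral_finsetSum s fun j _ => by simpa using hint j j]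
    exact Finset.sum_congr rfl fun j _ => integral_indicator_one (hE j)
  have hsecond : ∫ ω, Z ω ^ 2 ∂P = ∑ j ∈ s, ∑ k ∈ s, P.real (E j ∩ E k) := by
    simp_rw [Z, sq_sum_indicator_one]
    rw [integral_finsetSum s fun j _ => integrable_finsetSum s fun k _ => hint j k]
    refine Finset.sum_congr rfl fun j _ => ?_
    rw [integral_finsetSum s fun k _ => hint j k]
    exact Finset.sum_congr rfl fun k _ => integral_indicator_one ((hE j).inter (hE k))
  have hnone : ⋂ j ∈ s, (E j)ᶜ ⊆ {ω | S ^ 2 ≤ (S - Z ω) ^ 2} := by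
    intro ω hω
    have hZ0 : Z ω = 0 := Finset.sum_eq_zero fun j hj =>
      Set.indicator_of_notMem (Set.mem_iInter₂.mp hω j hj) _
    simp [hZ0]
  have hdev : ∀ ω, (S - Z ω) ^ 2 = (S ^ 2 - 2 * S * Z ω) + Z ω ^ 2 := fun ω => by ring
  have hlin_int : Integrable (fun ω => S ^ 2 - 2 * S * Z ω) P :=
    (integrable_const _).sub (hZ_int.const_mul _)
  have hdev_int : Integrable (fun ω => (S - Z ω) ^ 2) P := by
    simp_rw [hdev]; exact hlin_int.add hZ_sq_int
  calc P.real (⋂ j ∈ s, (E j)ᶜ) * S ^ 2 ≤ S ^ 2 * P.real {ω | S ^ 2 ≤ (S - Z ω) ^ 2} := by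
        rw [mul_comm]; exact mul_le_mul_of_nonneg_left (measureReal_mono hnone) (sq_nonneg S)
    _ ≤ ∫ ω, (S - Z ω) ^ 2 ∂P :=
        mul_meas_ge_le_integral_of_nonneg (Eventually.of_forall fun ω => sq_nonneg _) hdev_int _
    _ = ∫ ω, Z ω ^ 2 ∂P - S ^ 2 := by
        simp_rw [hdev]
        rw [integral_add hlin_int hZ_sq_int,
          integral_sub (integrable_const _) (hZ_int.const_mul _), integral_const_mul, hmean]
        simp; ring
    _ ≤ S := by linarith [sum_sum_measureReal_inter_le s hpair]

end SecondMoment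

def emptyCell {Ω ι β : Type*} (X : ι → Ω → β) (I : Finset ι) (C : Set β) : Set Ω :=
  {ω | ∀ i ∈ I, X i ω ∉ C}

section Occupancy

variable {Ω ι β : Type*} {X : ι → Ω → β} {I : Finset ι} {C C' : Set β}

lemma emptyCell_eq_biInter : emptyCell X I C = ⋂ i ∈ I, X i ⁻¹' Cᶜ := by
  ext ω; simp [emptyCell]

lemma emptyCell_inter_emptyCell :
    emptyCell X I C ∩ emptyCell X I C' = emptyCell X I (C ∪ C') := by
  ext ω
  simp [emptyCell, imp_and, forall_and]

variable [MeasurableSpace Ω] [MeasurableSpace β]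

lemma measurableSet_emptyCell (hX : ∀ i, Measurable (X i)) (hC : MeasurableSet C) :
    MeasurableSet (emptyCell X I C) := by
  rw [emptyCell_eq_biInter]
  exact .biInter I.countable_toSet fun i _ => hX i hC.compl

variable {P : Measure Ω} {ν : Measure β} [IsProbabilityMeasure ν]

lemma measureReal_emptyCell (hX : ∀ i, Measurable (X i))
    (hindep : ProbabilityTheory.iIndepFun X P) (hlaw : ∀ i, P.map (X i) = ν)
    (hC : MeasurableSet C) :
    P.real (emptyCell X I C) = (1 - ν.real C) ^ I.card := by
  have hfactor : ∀ i, P.real (X i ⁻¹' Cᶜ) = 1 - ν.real C := fun i => by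
    rw [← map_measureReal_apply (hX i) hC.compl, hlaw i, probReal_compl_eq_one_sub hC]
  rw [emptyCell_eq_biInter, measureReal_def,
    hindep.meas_biInter fun i _ => ⟨Cᶜ, hC.compl, rfl⟩, ENNReal.toReal_prod]
  simp only [← measureReal_def, hfactor, Finset.prod_const]

lemma measureReal_emptyCell_inter_le (hX : ∀ i, Measurable (X i))
    (hindep : ProbabilityTheory.iIndepFun X P) (hlaw : ∀ i, P.map (X i) = ν)
    (hC : MeasurableSet C) (hC' : MeasurableSet C') (hdisj : Disjoint C C') :
    P.real (emptyCell X I C ∩ emptyCell X I C') ≤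
      P.real (emptyCell X I C) * P.real (emptyCell X I C') := by
  have hunion : ν.real (C ∪ C') = ν.real C + ν.real C' := measureReal_union hdisj hC'
  have hle : ν.real C + ν.real C' ≤ 1 := hunion ▸ measureReal_le_one
  rw [emptyCell_inter_emptyCell, measureReal_emptyCell hX hindep hlaw (hC.union hC'),
    measureReal_emptyCell hX hindep hlaw hC, measureReal_emptyCell hX hindep hlaw hC', ← mul_pow,
    hunion]
  have hCnn : 0 ≤ ν.real C := measureReal_nonneg
  have hC'nn : 0 ≤ ν.real C' := measureReal_nonneg
  exact pow_le_pow_left₀ (by linarith) (by nlinarith) _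

lemma measureReal_iInter_compl_emptyCell_mul_le [IsProbabilityMeasure P]
    (hX : ∀ i, Measurable (X i)) (hindep : ProbabilityTheory.iIndepFun X P)
    (hlaw : ∀ i, P.map (X i) = ν) {η : Type*} [Fintype η] {C : η → Set β}
    (hC : ∀ k, MeasurableSet (C k))
    (hdisj : Pairwise fun k k' => Disjoint (C k) (C k')) {q : ℝ} (hq : ∀ k, ν.real (C k) ≤ q)
    (hq1 : q ≤ 1) :
    P.real (⋂ k, (emptyCell X I (C k))ᶜ) * (Fintype.card η * (1 - q) ^ I.card) ≤ 1 := by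
  set S := ∑ k, P.real (emptyCell X I (C k))
  have hS : Fintype.card η * (1 - q) ^ I.card ≤ S := by
    rw [← nsmul_eq_mul, ← Finset.card_univ, ← Finset.sum_const]
    refine Finset.sum_le_sum fun k _ => ?_
    rw [measureReal_emptyCell hX hindep hlaw (hC k)]
    exact pow_le_pow_left₀ (by linarith) (by linarith [hq k]) _
  have hsecond := measureReal_biInter_compl_mul_sq_le (P := P) Finset.univ
    (fun k => measurableSet_emptyCell (I := I) hX (hC k))
    fun k _ k' _ hkk' => measureReal_emptyCell_inter_le (I := I) hX hindep hlaw (hC k) (hC k')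
      (hdisj hkk')
  simp only [Finset.mem_univ, Set.iInter_true] at hsecond
  have hP := measureReal_nonneg (μ := P) (s := ⋂ k, (emptyCell X I (C k))ᶜ)
  rcases (Finset.sum_nonneg fun k _ => measureReal_nonneg : 0 ≤ S).eq_or_lt with hS0 | hS0
  · nlinarith
  · have : P.real (⋂ k, (emptyCell X I (C k))ᶜ) * S ≤ 1 := by
      rw [sq, ← mul_assoc] at hsecond
      exact (mul_le_iff_le_one_left hS0).mp (by linarith)
    nlinarith

end Occupancy

lemma withDensity_ofReal_apply_le {α : Type*} [MeasurableSpace α] {μ : Measure α} {f : α → ℝ}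
    {S C : Set α} {κ : ℝ} (hf : ∀ x ∈ S, f x ≤ κ) (hCS : C ⊆ S) (hC : MeasurableSet C) :
    μ.withDensity (fun x => ENNReal.ofReal (f x)) C ≤ ENNReal.ofReal κ * μ C := by
  rw [withDensity_apply _ hC, ← setLIntegral_const]
  exact setLIntegral_mono measurable_const fun x hx => ENNReal.ofReal_le_ofReal (hf x (hCS hx))

lemma exp_neg_mul_div_one_sub_le_one_sub_pow {q : ℝ} (hq : q < 1) (n : ℕ) :
    Real.exp (-(n * q / (1 - q))) ≤ (1 - q) ^ n := by
  have hq' : 0 < 1 - q := by linarith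
  have hlog : -(q / (1 - q)) ≤ Real.log (1 - q) := by
    convert Real.one_sub_inv_le_log_of_pos hq' using 1
    field_simp; ring
  calc Real.exp (-(n * q / (1 - q))) = Real.exp (n * -(q / (1 - q))) := by ring_nf
    _ ≤ Real.exp (n * Real.log (1 - q)) := by gcongr
    _ = (1 - q) ^ n := by rw [Real.exp_nat_mul, Real.exp_log hq']

lemma tendsto_mul_log_div_natCast_nhds_zero (a : ℝ) :
    Tendsto (fun n : ℕ => a * Real.log n / n) atTop (𝓝 0) := by
  simpa [mul_div_assoc] using ((Real.isLittleO_log_id_atTop.tendsto_div_nhds_zero).comp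
    tendsto_natCast_atTop_atTop).const_mul a

lemma tendsto_div_log_mul_one_sub_pow_atTop {a : ℝ} (ha0 : 0 ≤ a) (ha1 : a < 1) :
    Tendsto (fun n : ℕ => n / Real.log n * (1 - a * Real.log n / n) ^ n) atTop atTop := by
  obtain ⟨θ, haθ, hθ1⟩ := exists_between ha1
  have hθ0 : 0 < θ := ha0.trans_lt haθ
  have hlog : Tendsto (fun n : ℕ => Real.log n) atTop atTop :=
    Real.tendsto_log_atTop.comp tendsto_natCast_atTop_atTop
  have hq := tendsto_mul_log_div_natCast_nhds_zero a
  have hlower :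
      Tendsto (fun n : ℕ => Real.exp ((1 - θ) * Real.log n) / Real.log n) atTop atTop := by
    simpa [Function.comp_def] using
      (tendsto_exp_mul_div_rpow_atTop 1 (1 - θ) (by linarith)).comp hlog
  refine tendsto_atTop_mono' _ ?_ hlower
  filter_upwards [hlog.eventually_gt_atTop 0, eventually_gt_atTop 0,
    hq.eventually (gt_mem_nhds (div_pos (sub_pos.mpr haθ) hθ0))] with n hlogn hn hqn
  set q := a * Real.log n / n
  rw [lt_div_iff₀ hθ0] at hqn
  have hq1 : q < 1 := by nlinarith
  have hnq : n * q = a * Real.log n := by simp only [q]; field_simp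
  have hpow : Real.exp (-θ * Real.log n) ≤ (1 - q) ^ n := by
    refine le_trans ?_ (exp_neg_mul_div_one_sub_le_one_sub_pow hq1 n)
    rw [hnq, Real.exp_le_exp, mul_div_right_comm, neg_mul, neg_le_neg_iff]
    gcongr
    rw [div_le_iff₀ (by linarith)]
    linarith
  calc Real.exp ((1 - θ) * Real.log n) / Real.log n
      = n / Real.log n * Real.exp (-θ * Real.log n) := by
        rw [div_mul_eq_mul_div, ← Real.exp_log (Nat.cast_pos.mpr hn), ← Real.exp_add,
          Real.log_exp]; ring_nf
    _ ≤ n / Real.log n * (1 - q) ^ n := by gcongr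

lemma eventually_log_add_mul_log_log_add_lt {γ : ℝ} (hγ : 1 < γ) (b c : ℝ) :
    ∀ᶠ n : ℕ in atTop, Real.log n + b * Real.log (Real.log n) + c < γ * Real.log n := by
  have hlog : Tendsto (fun n : ℕ => Real.log n) atTop atTop :=
    Real.tendsto_log_atTop.comp tendsto_natCast_atTop_atTop
  have hsmall : (fun u => b * Real.log u + c) =o[atTop] id :=
    (Real.isLittleO_log_id_atTop.const_mul_left b).add (Asymptotics.isLittleO_const_id_atTop c)
  refine hlog.eventually (p := fun u => u + b * Real.log u + c < γ * u) ?_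
  filter_upwards [hsmall.bound (show 0 < (γ - 1) / 2 by linarith), eventually_gt_atTop 0]
    with u hu hu0
  rw [Real.norm_eq_abs, id, Real.norm_eq_abs, abs_of_pos hu0] at hu
  nlinarith [le_abs_self (b * Real.log u + c)]

noncomputable def spacingRadius (d : ℕ) (γ : ℝ) (n : ℕ) : ℝ :=
  (γ * Real.log n / n) ^ (d : ℝ)⁻¹

lemma spacingRadius_pow {d : ℕ} (hd : d ≠ 0) {γ : ℝ} (hγ : 0 ≤ γ) (n : ℕ) :
    spacingRadius d γ n ^ d = γ * Real.log n / n :=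
  Real.rpow_inv_natCast_pow (by have := Real.log_natCast_nonneg n; positivity) hd

lemma spacingRadius_pos {d : ℕ} {γ : ℝ} (hγ : 0 < γ) {n : ℕ} (hn : 2 ≤ n) :
    0 < spacingRadius d γ n := by
  have hlog : 0 < Real.log n := Real.log_pos (by exact_mod_cast hn)
  exact Real.rpow_pos_of_pos (by positivity) _

lemma tendsto_spacingRadius_nhds_zero {d : ℕ} (hd : d ≠ 0) (γ : ℝ) :
    Tendsto (spacingRadius d γ) atTop (𝓝 0) := by
  have := (Real.continuousAt_rpow_const 0 (d : ℝ)⁻¹ (Or.inr (by positivity))).tendsto.comp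
    (tendsto_mul_log_div_natCast_nhds_zero γ)
  rwa [Real.zero_rpow (inv_ne_zero (Nat.cast_ne_zero.mpr hd))] at this

lemma tendsto_floor_div_spacingRadius_pow_mul_atTop {d : ℕ} (hd : d ≠ 0) {c γ a : ℝ}
    (hc : 0 < c) (hγ : 0 < γ) (ha : 0 ≤ a) (haγ : a * γ < 1) :
    Tendsto (fun n : ℕ => (⌊c / spacingRadius d γ n⌋₊ : ℝ) ^ d *
      (1 - a * spacingRadius d γ n ^ d) ^ n) atTop atTop := by
  refine tendsto_atTop_mono' _ ?_ ((tendsto_div_log_mul_one_sub_pow_atTop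
    (mul_nonneg ha hγ.le) haγ).const_mul_atTop (by positivity : 0 < (c / 2) ^ d / γ))
  filter_upwards [eventually_ge_atTop 2, (tendsto_spacingRadius_nhds_zero hd γ).eventually
    (ge_mem_nhds hc)] with n hn hrn
  set r := spacingRadius d γ n
  have hr0 : 0 < r := spacingRadius_pos hγ hn
  have hrd : r ^ d = γ * Real.log n / n := spacingRadius_pow hd hγ.le n
  have hlog : 0 < Real.log n := Real.log_pos (by exact_mod_cast hn)
  have hq : 0 ≤ 1 - a * r ^ d := by
    have : Real.log n / n ≤ 1 :=
      div_le_one_of_le₀ (Real.log_le_self (Nat.cast_nonneg n)) (Nat.cast_nonneg n)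
    rw [hrd, mul_div_assoc, ← mul_assoc]
    nlinarith [mul_nonneg ha hγ.le]
  have hfloor : c / r / 2 ≤ ⌊c / r⌋₊ := by
    have hx : 1 ≤ c / r := (one_le_div hr0).mpr hrn
    have h1 : (1 : ℝ) ≤ ⌊c / r⌋₊ := by exact_mod_cast Nat.one_le_floor_iff _ |>.mpr hx
    linarith [Nat.lt_floor_add_one (c / r)]
  calc (c / 2) ^ d / γ * (n / Real.log n * (1 - a * γ * Real.log n / n) ^ n)
      = (c / r / 2) ^ d * (1 - a * r ^ d) ^ n := by
        rw [div_right_comm c r 2, div_pow (c / 2) r d, hrd]; field_simp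
    _ ≤ (⌊c / r⌋₊ : ℝ) ^ d * (1 - a * r ^ d) ^ n := by gcongr

section Alternative

variable {d : ℕ} {K A : Set (Fin d → ℝ)} {Ω : Type*} [MeasurableSpace Ω] {P : Measure Ω}
  [IsProbabilityMeasure P] {X : ℕ → Ω → Fin d → ℝ} {ν : Measure (Fin d → ℝ)}
  [IsProbabilityMeasure ν] {z : Fin d → ℝ} {ρ κ : ℝ}

lemma one_sub_inv_le_measureReal_le_maxSpacing (hd : d ≠ 0) (hK : volume K ≠ ⊤)
    (hAb : Bornology.IsBounded A) (hAconv : Convex ℝ A) (hAvol : volume A = 1)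
    (hX : ∀ i, Measurable (X i)) (hindep : ProbabilityTheory.iIndepFun X P)
    (hlaw : ∀ i, P.map (X i) = ν) (hSK : closedBall z ρ ⊆ K) (hκ : 0 ≤ κ)
    (hνS : ∀ C ⊆ closedBall z ρ, MeasurableSet C → ν C ≤ ENNReal.ofReal κ * volume C)
    {L : ℝ} (hL : 0 < L) (hAL : A ⊆ closedBall 0 L)
    {r : ℝ} (hr : 0 < r) {m : ℕ} (hm : 1 ≤ m) (hrm : 3 * (r * L) * m ≤ 2 * ρ)
    (hq : κ * r ^ d < 1) (n : ℕ) :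
    1 - ((m : ℝ) ^ d * (1 - κ * r ^ d) ^ n)⁻¹ ≤
      P.real {ω | r ≤ maxSpacing d K A ((fun i => X i ω) '' Set.Icc 1 n)} := by
  obtain ⟨w, hw_ball, hw_disj⟩ :=
    exists_pairwise_disjoint_closedBall_grid hm z (mul_pos hr hL) hrm
  -- Cells are translates of `r • closure A` rather than of `r • A`, which need not be measurable;
  -- by convexity they still have volume `r ^ d`.
  set cell : (Fin d → Fin m) → Set (Fin d → ℝ) := fun k => (fun y => w k + r • y) '' closure A
  have hcell_ball : ∀ k, cell k ⊆ closedBall (w k) (r * L) := by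
    rintro k _ ⟨y, hy, rfl⟩
    have hy' : ‖y‖ ≤ L := mem_closedBall_zero_iff.mp (closure_minimal hAL isClosed_closedBall hy)
    rw [mem_closedBall, dist_eq_norm, add_sub_cancel_left, norm_smul, Real.norm_eq_abs,
      abs_of_pos hr]
    exact mul_le_mul_of_nonneg_left hy' hr.le
  have hcell_meas : ∀ k, MeasurableSet (cell k) := fun k =>
    (hAb.isCompact_closure.image (by fun_prop)).isClosed.measurableSet
  have hcell_mass : ∀ k, ν.real (cell k) ≤ κ * r ^ d := by
    intro k
    have := hνS (cell k) ((hcell_ball k).trans (hw_ball k)) (hcell_meas k)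
    rw [Measure.addHaar_image_add_smul volume _ hr.le, hAconv.addHaar_closure volume, hAvol,
      Module.finrank_fin_fun, mul_one, ← ENNReal.ofReal_mul hκ] at this
    exact ENNReal.toReal_le_of_le_ofReal (by positivity) this
  have hhit := measureReal_iInter_compl_emptyCell_mul_le (I := Finset.Icc 1 n) hX hindep hlaw
    hcell_meas (fun k k' hkk' => (hw_disj hkk').mono (hcell_ball k) (hcell_ball k'))
    hcell_mass hq.le
  rw [Fintype.card_fun, Fintype.card_fin, Fintype.card_fin, Nat.card_Icc, Nat.add_sub_cancel,
    Nat.cast_pow] at hhit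
  have hS : 0 < (m : ℝ) ^ d * (1 - κ * r ^ d) ^ n := by
    have : 0 < 1 - κ * r ^ d := by linarith
    positivity
  have hempty : ⋃ k, emptyCell X (Finset.Icc 1 n) (cell k) ⊆
      {ω | r ≤ maxSpacing d K A ((fun i => X i ω) '' Set.Icc 1 n)} := by
    refine Set.iUnion_subset fun k ω hω => le_maxSpacing hd hK (by simp [hAvol]) hr.le
      ((Set.image_mono subset_closure).trans fun p hp => ⟨hSK (hw_ball k (hcell_ball k hp)), ?_⟩)
    rintro ⟨i, hi, rfl⟩
    exact hω i (Finset.mem_Icc.mpr hi) hp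
  calc 1 - ((m : ℝ) ^ d * (1 - κ * r ^ d) ^ n)⁻¹
      ≤ 1 - P.real (⋂ k, (emptyCell X (Finset.Icc 1 n) (cell k))ᶜ) := by
        rw [← one_div]; gcongr; exact (le_div_iff₀ hS).mpr hhit
    _ = P.real (⋃ k, emptyCell X (Finset.Icc 1 n) (cell k)) := by
        rw [← Set.compl_iUnion, probReal_compl_eq_one_sub
          (.iUnion fun k => measurableSet_emptyCell hX (hcell_meas k)), sub_sub_cancel]
    _ ≤ _ := measureReal_mono hempty

theorem tendsto_measure_le_pow_maxSpacing (hd : d ≠ 0) (hK : volume K ≠ ⊤)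
    (hAb : Bornology.IsBounded A) (hAconv : Convex ℝ A) (hAvol : volume A = 1)
    (hX : ∀ i, Measurable (X i)) (hindep : ProbabilityTheory.iIndepFun X P)
    (hlaw : ∀ i, P.map (X i) = ν) (hρ : 0 < ρ) (hSK : closedBall z ρ ⊆ K) (hκ : 0 ≤ κ)
    (hνS : ∀ C ⊆ closedBall z ρ, MeasurableSet C → ν C ≤ ENNReal.ofReal κ * volume C)
    {γ : ℝ} (hγ : 0 < γ) (hκγ : κ * γ < 1) :
    Tendsto (fun n : ℕ => P {ω | γ * Real.log n / n ≤
      maxSpacing d K A ((fun i => X i ω) '' Set.Icc 1 n) ^ d}) atTop (𝓝 1) := by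
  obtain ⟨L₀, hL₀⟩ := hAb.subset_closedBall 0
  set L := max L₀ 1
  have hL : 0 < L := zero_lt_one.trans_le (le_max_right _ _)
  have hAL : A ⊆ closedBall 0 L := hL₀.trans (closedBall_subset_closedBall (le_max_left _ _))
  set r := spacingRadius d γ
  set m : ℕ → ℕ := fun n => ⌊2 * ρ / (3 * L) / r n⌋₊
  set S : ℕ → ℝ := fun n => (m n : ℝ) ^ d * (1 - κ * r n ^ d) ^ n
  have hS : Tendsto S atTop atTop :=
    tendsto_floor_div_spacingRadius_pow_mul_atTop hd (by positivity) hγ hκ hκγ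
  refine tendsto_of_tendsto_of_tendsto_of_le_of_le' (g := fun n => ENNReal.ofReal (1 - (S n)⁻¹))
    ?_ tendsto_const_nhds ?_ (Eventually.of_forall fun n => prob_le_one)
  · simpa using ENNReal.tendsto_ofReal ((tendsto_const_nhds (x := (1 : ℝ))).sub
      hS.inv_tendsto_atTop)
  filter_upwards [eventually_ge_atTop 2, (tendsto_spacingRadius_nhds_zero hd γ).eventually
    (ge_mem_nhds (show 0 < 2 * ρ / (3 * L) by positivity)),
    (tendsto_mul_log_div_natCast_nhds_zero (κ * γ)).eventually (gt_mem_nhds one_pos)]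
    with n hn hrn hκt
  have hr0 : 0 < r n := spacingRadius_pos hγ hn
  have hrd : r n ^ d = γ * Real.log n / n := spacingRadius_pow hd hγ.le n
  have hm : 1 ≤ m n := Nat.one_le_floor_iff _ |>.mpr ((one_le_div hr0).mpr hrn)
  have hrm : 3 * (r n * L) * m n ≤ 2 * ρ := by
    have := Nat.floor_le (div_pos (by positivity : 0 < 2 * ρ / (3 * L)) hr0).le
    rw [le_div_iff₀ hr0, le_div_iff₀ (by positivity)] at this
    linarith
  have hκr : κ * r n ^ d < 1 := by rw [hrd]; simpa [mul_div_assoc, mul_assoc] using hκt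
  calc ENNReal.ofReal (1 - (S n)⁻¹)
      ≤ ENNReal.ofReal (P.real {ω | r n ≤ maxSpacing d K A ((fun i => X i ω) '' Set.Icc 1 n)}) :=
        ENNReal.ofReal_le_ofReal (one_sub_inv_le_measureReal_le_maxSpacing hd hK hAb hAconv hAvol
          hX hindep hlaw hSK hκ hνS hL hAL hr0 hm hrm hκr n)
    _ = P {ω | r n ≤ maxSpacing d K A ((fun i => X i ω) '' Set.Icc 1 n)} := ofReal_measureReal
    _ ≤ _ := measure_mono fun ω hω => by
        rw [Set.mem_ofPred_eq, ← hrd]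
        exact pow_le_pow_left₀ hr0.le hω d

end Alternative

theorem spacings_test_consistent_general
    (d : ℕ) (hd : 1 ≤ d)
    (K A : Set (Fin d → ℝ))
    (hKvol : volume K = 1)
    (hAb : Bornology.IsBounded A) (hAconv : Convex ℝ A)
    (hAvol : volume A = 1)
    {Ω : Type*} [MeasurableSpace Ω] (P : Measure Ω) [IsProbabilityMeasure P]
    (X : ℕ → Ω → (Fin d → ℝ)) (hXmeas : ∀ i, Measurable (X i))
    (hXindep : ProbabilityTheory.iIndepFun X P)
    (f : (Fin d → ℝ) → ℝ)
    (hXf : ∀ i, Measure.map (X i) P = volume.withDensity (fun x => ENNReal.ofReal (f x)))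
    (ε : ℝ) (hε : 0 < ε)
    (z : Fin d → ℝ) (ρ : ℝ) (hρ : 0 < ρ) (hSK : Metric.closedBall z ρ ⊆ K)
    (hfS : ∀ x ∈ Metric.closedBall z ρ, f x ≤ 1 - ε)
    (V : ℕ → Ω → ℝ)
    (hV : ∀ n ω, V n ω = (maxSpacing d K A ((fun i => X i ω) '' Set.Icc 1 n)) ^ d) :
    (∀ c : ℝ, Tendsto (fun n : ℕ =>
        P {ω | c < (n : ℝ) * V n ω - Real.log n - ((d : ℝ) - 1) * Real.log (Real.log n)})
      atTop (nhds 1)) ∧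
    (∀ g β : ℝ, Tendsto (fun n : ℕ =>
        P {ω | (g + Real.log n + ((d : ℝ) - 1) * Real.log (Real.log n) + β) / n < V n ω})
      atTop (nhds 1)) := by
  have : IsProbabilityMeasure (volume.withDensity fun x => ENNReal.ofReal (f x)) :=
    hXf 0 ▸ Measure.isProbabilityMeasure_map (hXmeas 0).aemeasurable
  set κ := max (1 - ε) 0
  have hκγ : κ * (2 / (1 + κ)) < 1 := by
    rw [mul_div_assoc', div_lt_one (by positivity)]
    linarith [max_lt (by linarith : 1 - ε < 1) one_pos]
  have hγ : 1 < 2 / (1 + κ) := by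
    rw [lt_div_iff₀ (by positivity)]
    linarith [max_lt (by linarith : 1 - ε < 1) one_pos]
  have hlower := tendsto_measure_le_pow_maxSpacing (by omega) (by simp [hKvol]) hAb hAconv hAvol
    hXmeas hXindep hXf hρ hSK (le_max_right _ _)
    (fun C hCS hC => withDensity_ofReal_apply_le (fun x hx => (hfS x hx).trans (le_max_left _ _))
      hCS hC) (by linarith) hκγ
  have hfirst : ∀ c : ℝ, Tendsto (fun n : ℕ =>
      P {ω | c < (n : ℝ) * V n ω - Real.log n - ((d : ℝ) - 1) * Real.log (Real.log n)})
      atTop (nhds 1) := fun c => by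
    refine tendsto_of_tendsto_of_tendsto_of_le_of_le' hlower tendsto_const_nhds ?_
      (Eventually.of_forall fun n => prob_le_one)
    filter_upwards [eventually_log_add_mul_log_log_add_lt hγ ((d : ℝ) - 1) c,
      eventually_gt_atTop 0] with n hlt hn
    refine measure_mono fun ω hω => ?_
    rw [Set.mem_ofPred_eq, div_le_iff₀ (by positivity), ← hV] at hω
    rw [Set.mem_ofPred_eq]
    linarith
  refine ⟨hfirst, fun g β => (hfirst (g + β)).congr' ?_⟩
  filter_upwards [eventually_gt_atTop 0] with n hn
  congr 1
  ext ω
  rw [Set.mem_ofPred_eq, Set.mem_ofPred_eq, div_lt_iff₀ (by positivity)]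
  constructor <;> intro h <;> linarith

/-- Consistency of the maximum spacings test for multivariate uniformity:
if the i.i.d. sample `X₁, X₂, …` has a Lebesgue density `f` which satisfies
`f ≤ 1 - ε` on some ball contained in `K`, then for every real `c`,
`P(n Vₙ − log n − (d−1) log log n > c) → 1`, and in particular
`P(Vₙ > c_{n,α}) → 1` for the critical values `c_{n,α}`. -/
theorem spacings_test_consistent
    (d : ℕ) (hd : 1 ≤ d)
    (K A : Set (Fin d → ℝ))
    (hKb : Bornology.IsBounded K) (hKvol : volume K = 1)
    (hKfr : volume (frontier K) = 0)
    (hAb : Bornology.IsBounded A) (hAconv : Convex ℝ A)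
    (hAint : (interior A).Nonempty) (hAvol : volume A = 1)
    {Ω : Type*} [MeasurableSpace Ω] (P : Measure Ω) [IsProbabilityMeasure P]
    (X : ℕ → Ω → (Fin d → ℝ)) (hXmeas : ∀ i, Measurable (X i))
    (hXK : ∀ i ω, X i ω ∈ K)
    (hXindep : ProbabilityTheory.iIndepFun X P)
    (f : (Fin d → ℝ) → ℝ) (hfm : Measurable f)
    (hXf : ∀ i, Measure.map (X i) P = volume.withDensity (fun x => ENNReal.ofReal (f x)))
    (ε : ℝ) (hε : 0 < ε)
    (z : Fin d → ℝ) (ρ : ℝ) (hρ : 0 < ρ) (hSK : Metric.closedBall z ρ ⊆ K)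
    (hfS : ∀ x ∈ Metric.closedBall z ρ, f x ≤ 1 - ε)
    (V : ℕ → Ω → ℝ)
    (hV : ∀ n ω, V n ω = (maxSpacing d K A ((fun i => X i ω) '' Set.Icc 1 n)) ^ d) :
    (∀ c : ℝ, Tendsto (fun n : ℕ =>
        P {ω | c < (n : ℝ) * V n ω - Real.log n - ((d : ℝ) - 1) * Real.log (Real.log n)})
      atTop (nhds 1)) ∧
    (∀ g β : ℝ, Tendsto (fun n : ℕ =>
        P {ω | (g + Real.log n + ((d : ℝ) - 1) * Real.log (Real.log n) + β) / n < V n ω})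
      atTop (nhds 1)) :=
  spacings_test_consistent_general d hd K A hKvol hAb hAconv hAvol P X hXmeas hXindep f hXf ε hε z ρ
    hρ hSK hfS V hV
end

section
/- Let (V_m)_{m≥1} be nonnegative random variables with m V_m / log m → 1 almost surely as m → ∞. Let (k_n) be positive integers with 0 < a ≤ k_n/n ≤ b < ∞ for all n and some constants a, b, and let (L_n) be positive-integer-valued random variables with L_n = k_n + O_P(√n) and L_n → ∞ almost surely. Then (L_n − k_n) · V_{L_n} → 0 in probability as n → ∞. -/
/-!
Fix `ε > 0` and take `M` from the `O_P(√n)` bound, so that the event `Bₙ = {M√n < |Lₙ - kₙ|}`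
has probability at most `ε` for every `n`. Off `Bₙ` we have `Lₙ ≥ kₙ - M√n ≥ a n / 2` for large
`n`, hence `|(Lₙ - kₙ) V_{Lₙ}| ≤ M √n |V_{Lₙ}| ≲ √Lₙ |V_{Lₙ}|`, and `√m V_m = O(log m / √m) → 0`
almost surely. So the product truncated to the complement of `Bₙ` tends to `0` almost surely,
hence in probability, and discarding `Bₙ` costs at most `ε`.
-/

open MeasureTheory Filter Asymptotics

theorem tendstoInMeasure_of_forall_eqOn_compl {α ι E : Type*} [MeasurableSpace α] {μ : Measure α}
    [EDist E] {l : Filter ι} {f : ι → α → E} {u : α → E}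
    (h : ∀ ε > 0, ∃ (g : ι → α → E) (B : ι → Set α), TendstoInMeasure μ g l u ∧
      (∀ᶠ i in l, μ (B i) ≤ ε) ∧ ∀ i, Set.EqOn (f i) (g i) (B i)ᶜ) :
    TendstoInMeasure μ f l u := by
  intro δ hδ
  refine ENNReal.tendsto_nhds_zero.mpr fun ε hε => ?_
  obtain ⟨g, B, hg, hB, hfg⟩ := h (ε / 2) (ENNReal.half_pos hε.ne')
  filter_upwards [hB, ENNReal.tendsto_nhds_zero.mp (hg δ hδ) (ε / 2) (ENNReal.half_pos hε.ne')]
    with i hBi hgi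
  have hsub : {x | δ ≤ edist (f i x) (u x)} ⊆ B i ∪ {x | δ ≤ edist (g i x) (u x)} := by
    intro x hx
    by_cases hxB : x ∈ B i
    · exact Or.inl hxB
    · exact Or.inr (show δ ≤ edist (g i x) (u x) from hfg i hxB ▸ hx)
  calc μ {x | δ ≤ edist (f i x) (u x)} ≤ μ (B i) + μ {x | δ ≤ edist (g i x) (u x)} :=
        (measure_mono hsub).trans (measure_union_le _ _)
    _ ≤ ε / 2 + ε / 2 := add_le_add hBi hgi
    _ = ε := ENNReal.add_halves ε

theorem measurable_apply_index {Ω ι β : Type*} [MeasurableSpace Ω] [MeasurableSpace ι]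
    [Countable ι] [MeasurableSingletonClass ι] [MeasurableSpace β] {f : ι → Ω → β}
    (hf : ∀ i, Measurable (f i)) {N : Ω → ι} (hN : Measurable N) :
    Measurable fun ω => f (N ω) ω :=
  (measurable_from_prod_countable_left (f := fun p : Ω × ι => f p.2 p.1) hf).comp
    (measurable_id.prodMk hN)

theorem isBigO_log_div_of_tendsto_mul_div_log {v : ℕ → ℝ} {c : ℝ}
    (hv : Tendsto (fun m : ℕ => m * v m / Real.log m) atTop (nhds c)) :
    v =O[atTop] fun m : ℕ => Real.log m / m := by
  refine isBigO_of_div_tendsto_nhds ?_ c (hv.congr fun m => ?_)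
  · filter_upwards [eventually_ge_atTop 2] with m hm h0
    have : (1 : ℝ) < m := by exact_mod_cast hm
    exact absurd h0 (div_ne_zero (Real.log_pos this).ne' (by positivity))
  · simp only [Pi.div_apply]
    rw [div_div_eq_mul_div, mul_comm]

theorem tendsto_sqrt_mul_log_div_atTop :
    Tendsto (fun x : ℝ => √x * (Real.log x / x)) atTop (nhds 0) := by
  refine ((isLittleO_log_rpow_atTop (by norm_num : (0 : ℝ) < 1 / 2)).tendsto_div_nhds_zero).congr
    fun x => ?_
  rw [← Real.sqrt_eq_rpow, mul_div_left_comm, Real.sqrt_div_self', mul_one_div]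

theorem tendsto_sqrt_mul_of_isBigO_log_div {v : ℕ → ℝ}
    (hv : v =O[atTop] fun m : ℕ => Real.log m / m) :
    Tendsto (fun m : ℕ => √m * v m) atTop (nhds 0) :=
  ((isBigO_refl (fun m : ℕ => √m) atTop).mul hv).trans_tendsto
    (tendsto_sqrt_mul_log_div_atTop.comp tendsto_natCast_atTop_atTop)

theorem eventually_forall_sqrt_mul_abs_le {v : ℕ → ℝ}
    (hv : Tendsto (fun m : ℕ => √m * v m) atTop (nhds 0)) {c ε : ℝ} (hc : 0 < c) (hε : 0 < ε) :
    ∀ᶠ n : ℕ in atTop, ∀ m : ℕ, c * n ≤ m → √n * |v m| ≤ ε := by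
  have hc' : 0 < √c := Real.sqrt_pos.mpr hc
  obtain ⟨m₀, hm₀⟩ := Metric.tendsto_atTop.mp hv (√c * ε) (by positivity)
  filter_upwards [(tendsto_natCast_atTop_atTop.const_mul_atTop hc).eventually_ge_atTop (m₀ : ℝ)]
    with n hn m hm
  have hvm : √m * |v m| < √c * ε := by
    simpa [Real.dist_eq, abs_mul, abs_of_nonneg (Real.sqrt_nonneg _)]
      using hm₀ m (by exact_mod_cast hn.trans hm)
  have hsqrt : √c * √n ≤ √m := by
    rw [← Real.sqrt_mul hc.le]
    exact Real.sqrt_le_sqrt hm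
  refine le_of_mul_le_mul_left ?_ hc'
  calc √c * (√n * |v m|) = (√c * √n) * |v m| := (mul_assoc _ _ _).symm
    _ ≤ √m * |v m| := mul_le_mul_of_nonneg_right hsqrt (abs_nonneg _)
    _ ≤ √c * ε := hvm.le

theorem eventually_mul_sqrt_le_mul (C : ℝ) {c : ℝ} (hc : 0 < c) :
    ∀ᶠ n : ℕ in atTop, C * √n ≤ c * n := by
  filter_upwards [(Real.tendsto_sqrt_atTop.comp tendsto_natCast_atTop_atTop).eventually_ge_atTop
    (C / c)] with n hn
  calc C * √n ≤ (c * √n) * √n :=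
        mul_le_mul_of_nonneg_right ((div_le_iff₀' hc).mp hn) (Real.sqrt_nonneg _)
    _ = c * n := by rw [mul_assoc, Real.mul_self_sqrt (Nat.cast_nonneg n)]

theorem tendsto_ite_abs_sub_le_mul_sqrt {v : ℕ → ℝ}
    (hv : Tendsto (fun m : ℕ => √m * v m) atTop (nhds 0)) {k : ℕ → ℝ} {a : ℝ} (ha : 0 < a)
    (hk : ∀ᶠ n : ℕ in atTop, a * n ≤ k n) (M : ℝ) (ℓ : ℕ → ℕ) :
    Tendsto (fun n => if |(ℓ n : ℝ) - k n| ≤ M * √n then ((ℓ n : ℝ) - k n) * v (ℓ n) else 0)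
      atTop (nhds 0) := by
  refine Metric.tendsto_nhds.mpr fun ε hε => ?_
  filter_upwards [hk, eventually_mul_sqrt_le_mul |M| (half_pos ha),
    eventually_forall_sqrt_mul_abs_le hv (half_pos ha) (ε := ε / (|M| + 1)) (by positivity)]
    with n hkn hMn hvn
  split_ifs with hgood
  · have hM : M * √n ≤ |M| * √n :=
      mul_le_mul_of_nonneg_right (le_abs_self M) (Real.sqrt_nonneg _)
    have hℓ : a / 2 * n ≤ ℓ n := by linarith [(abs_le.mp hgood).1]
    rw [Real.dist_0_eq_abs, abs_mul]
    calc |(ℓ n : ℝ) - k n| * |v (ℓ n)| ≤ |M| * (√n * |v (ℓ n)|) := by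
          rw [← mul_assoc]; exact mul_le_mul_of_nonneg_right (hgood.trans hM) (abs_nonneg _)
      _ ≤ |M| * (ε / (|M| + 1)) := mul_le_mul_of_nonneg_left (hvn _ hℓ) (abs_nonneg M)
      _ < ε := by
          rw [mul_div_assoc', div_lt_iff₀ (by positivity)]
          nlinarith [abs_nonneg M]
  · simpa using hε

theorem sample_size_difference_times_spacing_in_probability_general
    {Ω : Type*} [MeasurableSpace Ω] (P : Measure Ω) [IsProbabilityMeasure P]
    (V : ℕ → Ω → ℝ) (hVm : ∀ m, Measurable (V m))
    (has : ∀ᵐ ω ∂P, Tendsto (fun m : ℕ => (m : ℝ) * V m ω / Real.log m) atTop (nhds 1))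
    (k : ℕ → ℕ) (a b : ℝ) (ha : 0 < a)
    (hk : ∀ n : ℕ, 1 ≤ n → a ≤ (k n : ℝ) / n ∧ (k n : ℝ) / n ≤ b)
    (L : ℕ → Ω → ℕ) (hLm : ∀ n, Measurable (L n))
    -- `Lₙ = kₙ + O_P(√n)`:
    (hLO : ∀ δ : ℝ, 0 < δ → ∃ M : ℝ, ∀ n : ℕ,
      P {ω | M * Real.sqrt n < |(L n ω : ℝ) - (k n : ℝ)|} ≤ ENNReal.ofReal δ) :
    ∀ δ : ℝ, 0 < δ → Tendsto (fun n : ℕ =>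
        P {ω | δ < |((L n ω : ℝ) - (k n : ℝ)) * V (L n ω) ω|}) atTop (nhds 0) := by
  set X : ℕ → Ω → ℝ := fun n ω => ((L n ω : ℝ) - k n) * V (L n ω) ω
  have hka : ∀ᶠ n : ℕ in atTop, a * n ≤ k n := by
    filter_upwards [eventually_ge_atTop 1] with n hn
    exact (le_div_iff₀ (by exact_mod_cast hn)).mp (hk n hn).1
  have hdev : ∀ n, Measurable fun ω => |(L n ω : ℝ) - k n| := fun n =>
    ((measurable_from_top.comp (hLm n)).sub measurable_const).abs
  have hX : ∀ n, Measurable (X n) := fun n =>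
    ((measurable_from_top.comp (hLm n)).sub measurable_const).mul
      (measurable_apply_index hVm (hLm n))
  have hXP : TendstoInMeasure P X atTop 0 := by
    refine tendstoInMeasure_of_forall_eqOn_compl fun ε hε => ?_
    obtain ⟨r, -, hr, hrε⟩ := ENNReal.lt_iff_exists_real_btwn.mp hε
    obtain ⟨M, hM⟩ := hLO r (ENNReal.ofReal_pos.mp hr)
    refine ⟨fun n ω => if |(L n ω : ℝ) - k n| ≤ M * √n then X n ω else 0,
      fun n => {ω | M * √n < |(L n ω : ℝ) - k n|}, ?_,
      .of_forall fun n => (hM n).trans hrε.le,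
      fun n ω (hω : ¬M * √n < _) => (if_pos (not_lt.mp hω)).symm⟩
    refine tendstoInMeasure_of_tendsto_ae (fun n => ?_) ?_
    · exact (Measurable.ite (measurableSet_le (hdev n) measurable_const) (hX n)
        measurable_const).aestronglyMeasurable
    · filter_upwards [has] with ω hω
      exact tendsto_ite_abs_sub_le_mul_sqrt (tendsto_sqrt_mul_of_isBigO_log_div
        (isBigO_log_div_of_tendsto_mul_div_log hω)) ha hka M (fun n => L n ω)
  intro δ hδ
  refine tendsto_of_tendsto_of_tendsto_of_le_of_le tendsto_const_nhds
    (tendstoInMeasure_iff_norm.mp hXP δ hδ) (fun n => zero_le) fun n => measure_mono ?_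
  intro ω hω
  simpa using hω.le

/-- If `m V_m / log m → 1` a.s., `kₙ ≍ n`, `Lₙ = kₙ + O_P(√n)` and `Lₙ → ∞` a.s.,
then `(Lₙ − kₙ) · V_{Lₙ} → 0` in probability. -/
theorem sample_size_difference_times_spacing_in_probability
    {Ω : Type*} [MeasurableSpace Ω] (P : Measure Ω) [IsProbabilityMeasure P]
    (V : ℕ → Ω → ℝ) (hVm : ∀ m, Measurable (V m)) (hVnonneg : ∀ m ω, 0 ≤ V m ω)
    (has : ∀ᵐ ω ∂P, Tendsto (fun m : ℕ => (m : ℝ) * V m ω / Real.log m) atTop (nhds 1))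
    (k : ℕ → ℕ) (hk1 : ∀ n, 1 ≤ k n) (a b : ℝ) (ha : 0 < a)
    (hk : ∀ n : ℕ, 1 ≤ n → a ≤ (k n : ℝ) / n ∧ (k n : ℝ) / n ≤ b)
    (L : ℕ → Ω → ℕ) (hLm : ∀ n, Measurable (L n)) (hL1 : ∀ n ω, 1 ≤ L n ω)
    -- `Lₙ = kₙ + O_P(√n)`:
    (hLO : ∀ δ : ℝ, 0 < δ → ∃ M : ℝ, ∀ n : ℕ,
      P {ω | M * Real.sqrt n < |(L n ω : ℝ) - (k n : ℝ)|} ≤ ENNReal.ofReal δ)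
    (hLinf : ∀ᵐ ω ∂P, Tendsto (fun n : ℕ => L n ω) atTop atTop) :
    ∀ δ : ℝ, 0 < δ → Tendsto (fun n : ℕ =>
        P {ω | δ < |((L n ω : ℝ) - (k n : ℝ)) * V (L n ω) ω|}) atTop (nhds 0) :=
  sample_size_difference_times_spacing_in_probability_general P V hVm has k a b ha hk L hLm hLO
end
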